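/- arXiv:1708.09061 — 2 statements merged into one kernel-verified Lean document; each statement's English description precedes it below -/
import Mathlib

section
/- Let κ be an uncountable cardinal and let 𝒰 be a normal ultrafilter on κ, i.e., a nonprincipal ultrafilter on κ that is κ-complete (closed under intersections of fewer than κ of its members) and closed under diagonal intersections (if Y_α ∈ 𝒰 for all α < κ, then {β < κ : β ∈ Y_α for all α < β} ∈ 𝒰). Then every set in Σ([κ]^{<ω}, 𝒫(κ) − 𝒰) is Ramsey, as witnessed by a homogeneous set H that belongs to 𝒰. -/
open Set Cardinal

universe u

/-- `[κ]^κ`: the subsets of `κ` (viewed as the set of ordinals `< κ`) of cardinality `κ`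
(equivalently, of order type `κ`). -/
def bigSets (κ : Cardinal.{0}) : Set (Set Ordinal.{0}) :=
  {X | X ⊆ Set.Iio κ.ord ∧ #X = Cardinal.lift.{1} κ}

/-- `[H]^κ`: the subsets of `H` of cardinality `κ`. -/
def subBig (κ : Cardinal.{0}) (H : Set Ordinal.{0}) : Set (Set Ordinal.{0}) :=
  {X | X ⊆ H ∧ #X = Cardinal.lift.{1} κ}

/-- `X` matches the pattern `(A,B)`: `A ⊆ X` and `B ∩ X = ∅`. -/
def Matches (X A B : Set Ordinal.{0}) : Prop :=
  A ⊆ X ∧ B ∩ X = ∅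

/-- `[A;B]`: the members of `[κ]^κ` matching the pattern `(A,B)`. -/
def patternSet (κ : Cardinal.{0}) (A B : Set Ordinal.{0}) : Set (Set Ordinal.{0}) :=
  {X ∈ bigSets κ | Matches X A B}

/-- `Σ(𝒜,ℬ)`: the subsets of `[κ]^κ` which are unions of sets `[A;B]` with
`A ∈ 𝒜`, `B ∈ ℬ`, `A ∩ B = ∅`. -/
def SigmaFam (κ : Cardinal.{0}) (𝒜 ℬ : Set (Set Ordinal.{0})) : Set (Set (Set Ordinal.{0})) :=
  {S | ∃ Q : Set (Set Ordinal.{0} × Set Ordinal.{0}),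
    (∀ p ∈ Q, p.1 ∈ 𝒜 ∧ p.2 ∈ ℬ ∧ Disjoint p.1 p.2) ∧
    S = {X ∈ bigSets κ | ∃ p ∈ Q, Matches X p.1 p.2}}

/-- `Δ(𝒜,ℬ)`: those `S` with both `S` and `[κ]^κ \ S` in `Σ(𝒜,ℬ)`. -/
def DeltaFam (κ : Cardinal.{0}) (𝒜 ℬ : Set (Set Ordinal.{0})) : Set (Set (Set Ordinal.{0})) :=
  {S | S ∈ SigmaFam κ 𝒜 ℬ ∧ bigSets κ \ S ∈ SigmaFam κ 𝒜 ℬ}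

/-- `[κ]^{<γ}`: subsets of `κ` of cardinality `< γ`. -/
def smallSets (κ γ : Cardinal.{0}) : Set (Set Ordinal.{0}) :=
  {A | A ⊆ Set.Iio κ.ord ∧ #A < Cardinal.lift.{1} γ}

/-- `[κ]^n`: `n`-element subsets of `κ`. -/
def nSets (κ : Cardinal.{0}) (n : ℕ) : Set (Set Ordinal.{0}) :=
  {A | A ⊆ Set.Iio κ.ord ∧ #A = n}

/-- `[κ]^{<ω}`: finite subsets of `κ`. -/
def finSets (κ : Cardinal.{0}) : Set (Set Ordinal.{0}) :=
  {A | A ⊆ Set.Iio κ.ord ∧ A.Finite}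

/-- `[κ]^ω`: subsets of `κ` of order type `ω`. -/
def omegaSets (κ : Cardinal.{0}) : Set (Set Ordinal.{0}) :=
  {A | A ⊆ Set.Iio κ.ord ∧ A.Infinite ∧ ∀ a ∈ A, (A ∩ Set.Iio a).Finite}

/-- `S ⊆ [κ]^κ` is Ramsey: some `H ∈ [κ]^κ` is homogeneous for `S`. -/
def IsRamsey (κ : Cardinal.{0}) (S : Set (Set Ordinal.{0})) : Prop :=
  ∃ H ∈ bigSets κ, subBig κ H ⊆ S ∨ subBig κ H ∩ S = ∅
/-- `U` is a `κ`-complete nonprincipal ultrafilter on `κ` (viewed as the set of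
ordinals `< κ`): a proper, upward-closed (within `𝒫(κ)`) family containing `κ`,
deciding every subset of `κ`, containing no singleton, and closed under
intersections of fewer than `κ` of its members. -/
def IsKCUltrafilter (κ : Cardinal.{0}) (U : Set (Set Ordinal.{0})) : Prop :=
  (∀ Y ∈ U, Y ⊆ Set.Iio κ.ord) ∧
  Set.Iio κ.ord ∈ U ∧
  (∅ : Set Ordinal.{0}) ∉ U ∧
  (∀ Y Z : Set Ordinal.{0}, Y ∈ U → Y ⊆ Z → Z ⊆ Set.Iio κ.ord → Z ∈ U) ∧
  (∀ Y ⊆ Set.Iio κ.ord, Y ∈ U ∨ Set.Iio κ.ord \ Y ∈ U) ∧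
  (∀ α : Ordinal.{0}, {α} ∉ U) ∧
  (∀ (I : Set Ordinal.{0}) (Y : Ordinal.{0} → Set Ordinal.{0}),
    I.Nonempty → #I < Cardinal.lift.{1} κ → (∀ i ∈ I, Y i ∈ U) → (⋂ i ∈ I, Y i) ∈ U)

/-- `U` is a normal ultrafilter on `κ`: a `κ`-complete nonprincipal ultrafilter
on `κ` closed under diagonal intersections. -/
def IsNormalUltrafilter (κ : Cardinal.{0}) (U : Set (Set Ordinal.{0})) : Prop :=
  IsKCUltrafilter κ U ∧
  ∀ Y : Ordinal.{0} → Set Ordinal.{0}, (∀ α < κ.ord, Y α ∈ U) →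
    {β | β < κ.ord ∧ ∀ α < β, β ∈ Y α} ∈ U

/-! Write `S` as the union of the `[A;B]` with `(A, B) ∈ Q`. For each `n`, colour the increasing
`n`-tuples by whether their range matches a pattern of `Q`, and fix such a pattern for every
winning tuple. Normality gives, for every `n`, a set in `𝒰` homogeneous for this colouring
(Rowbottom's theorem) and a diagonal intersection in `𝒰` whose elements avoid the forbidden part
`B ∉ 𝒰` of the pattern fixed for each tuple below them; `H` is the intersection of these
countably many sets. If some `n` is winning, every `X ∈ [H]^κ` matches the pattern fixed for its
first `n` elements. Otherwise no `X ⊆ H` matches a pattern `(A, B)` of `Q`, since the increasing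
enumeration of the finite set `A` would be a winning tuple from `H`. -/

open InitialSeg

namespace IsKCUltrafilter

variable {κ : Cardinal.{0}} {U : Set (Set Ordinal.{0})} {Y Z : Set Ordinal.{0}}

theorem subset_Iio (hU : IsKCUltrafilter κ U) (hY : Y ∈ U) : Y ⊆ Iio κ.ord := hU.1 Y hY

theorem Iio_mem (hU : IsKCUltrafilter κ U) : Iio κ.ord ∈ U := hU.2.1

theorem empty_notMem (hU : IsKCUltrafilter κ U) : ∅ ∉ U := hU.2.2.1

theorem mem_of_superset (hU : IsKCUltrafilter κ U) (hY : Y ∈ U) (hYZ : Y ⊆ Z)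
    (hZ : Z ⊆ Iio κ.ord) : Z ∈ U :=
  hU.2.2.2.1 Y Z hY hYZ hZ

theorem mem_or_diff_mem (hU : IsKCUltrafilter κ U) (hY : Y ⊆ Iio κ.ord) :
    Y ∈ U ∨ Iio κ.ord \ Y ∈ U :=
  hU.2.2.2.2.1 Y hY

theorem singleton_notMem (hU : IsKCUltrafilter κ U) (α : Ordinal.{0}) : {α} ∉ U :=
  hU.2.2.2.2.2.1 α

theorem biInter_mem (hU : IsKCUltrafilter κ U) {I : Set Ordinal.{0}} (hI : I.Nonempty)
    (hIκ : #I < lift.{1} κ) {Y : Ordinal.{0} → Set Ordinal.{0}} (hY : ∀ i ∈ I, Y i ∈ U) :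
    ⋂ i ∈ I, Y i ∈ U :=
  hU.2.2.2.2.2.2 I Y hI hIκ hY

theorem iInter_mem (hU : IsKCUltrafilter κ U) {ι : Type} [Nonempty ι] (hι : #ι < κ)
    {Y : ι → Set Ordinal.{0}} (hY : ∀ i, Y i ∈ U) : ⋂ i, Y i ∈ U := by
  set g : ι → Ordinal.{0} := fun i => Ordinal.typein WellOrderingRel i
  have hg : Function.Injective g := Ordinal.typein_injective _
  have hcard : #(range g) < lift.{1} κ := by
    simpa using mk_range_le_lift.trans_lt (lift_strictMono hι)
  have := hU.biInter_mem (Y := fun o => Y (Function.invFun g o)) (range_nonempty g) hcard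
    (by rintro _ ⟨i, rfl⟩; exact hY _)
  simpa only [biInter_range, Function.leftInverse_invFun hg _] using this

theorem inter_mem (hU : IsKCUltrafilter κ U) (hκ : ℵ₀ < κ) (hY : Y ∈ U) (hZ : Z ∈ U) :
    Y ∩ Z ∈ U := by
  rw [inter_eq_iInter]
  exact hU.iInter_mem ((by simp : #Bool < ℵ₀).trans hκ) (Bool.forall_bool.2 ⟨hZ, hY⟩)

theorem diff_mem_of_notMem (hU : IsKCUltrafilter κ U) (hY : Y ⊆ Iio κ.ord) (hYU : Y ∉ U) :
    Iio κ.ord \ Y ∈ U :=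
  (hU.mem_or_diff_mem hY).resolve_left hYU

theorem mk_eq_of_mem (hU : IsKCUltrafilter κ U) (hκ : ℵ₀ < κ) (hY : Y ∈ U) :
    #Y = lift.{1} κ := by
  refine (mk_le_mk_of_subset (hU.subset_Iio hY)).trans_eq (by simp) |>.eq_of_not_lt fun hlt => ?_
  have hne : Y.Nonempty := nonempty_iff_ne_empty.2 fun h => hU.empty_notMem (h ▸ hY)
  have hcompl := hU.biInter_mem (Y := fun α => Iio κ.ord \ {α}) hne hlt fun α hα =>
    hU.diff_mem_of_notMem (singleton_subset_iff.2 (hU.subset_Iio hY hα)) (hU.singleton_notMem α)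
  refine hU.empty_notMem ?_
  convert hU.inter_mem hκ hcompl hY
  ext α
  simp only [mem_empty_iff_false, false_iff, mem_inter_iff, mem_iInter, mem_sdiff, not_and]
  exact fun h hα => (h α hα).2 rfl

end IsKCUltrafilter

theorem nonempty_nat_initialSeg {α : Type*} [LinearOrder α] [WellFoundedLT α] [Infinite α] :
    Nonempty (ℕ ≤i α) := by
  refine Ordinal.lift_type_le.{_, _, 0}.1 ?_
  rw [Ordinal.type_nat_lt, Ordinal.lift_omega0, ← Ordinal.aleph0_le_card, ← Ordinal.lift_card,
    Ordinal.card_type, Cardinal.aleph0_le_lift]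
  exact Cardinal.infinite_iff.1 inferInstance

theorem Set.Infinite.exists_strictMono_initialSegment {α : Type*} [LinearOrder α]
    [WellFoundedLT α] {X : Set α} (hX : X.Infinite) (n : ℕ) :
    ∃ x : Fin n → α, StrictMono x ∧ (∀ i, x i ∈ X) ∧ ∀ β ∈ X, β ∉ range x → ∀ i, x i < β := by
  have := hX.to_subtype
  obtain ⟨f⟩ := nonempty_nat_initialSeg (α := X)
  refine ⟨fun i => f i, fun i j h => f.strictMono h, fun i => (f i).2, fun β hβ hβx i => ?_⟩
  by_contra! hle
  obtain ⟨j, hj, hfj⟩ := f.le_apply_iff.1 (show (⟨β, hβ⟩ : X) ≤ f i from hle)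
  exact hβx ⟨⟨j, hj.trans_lt i.2⟩, congrArg Subtype.val hfj⟩

theorem Set.Finite.exists_strictMono_range_eq {α : Type*} [LinearOrder α] {A : Set α}
    (hA : A.Finite) : ∃ (n : ℕ) (x : Fin n → α), StrictMono x ∧ range x = A :=
  ⟨_, hA.toFinset.orderEmbOfFin rfl, (hA.toFinset.orderEmbOfFin rfl).strictMono, by simp⟩

def diagInter (κ : Cardinal.{0}) {n : ℕ} (Y : (Fin n → Ordinal.{0}) → Set Ordinal.{0}) :
    Set Ordinal.{0} :=
  {β | β < κ.ord ∧ ∀ s : Fin n → Ordinal.{0}, (∀ i, s i < β) → β ∈ Y s}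

def IsHomogeneous {n : ℕ} (c : (Fin n → Ordinal.{0}) → Prop) (H : Set Ordinal.{0}) : Prop :=
  ∃ P : Prop, ∀ x : Fin n → Ordinal.{0}, StrictMono x → (∀ i, x i ∈ H) → (c x ↔ P)

namespace IsNormalUltrafilter

variable {κ : Cardinal.{0}} {U : Set (Set Ordinal.{0})}

theorem diag_mem (hU : IsNormalUltrafilter κ U) {Y : Ordinal.{0} → Set Ordinal.{0}}
    (hY : ∀ α, Y α ∈ U) : {β | β < κ.ord ∧ ∀ α < β, β ∈ Y α} ∈ U :=
  hU.2 Y fun α _ => hY α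

theorem diagInter_mem (hU : IsNormalUltrafilter κ U) {n : ℕ}
    {Y : (Fin n → Ordinal.{0}) → Set Ordinal.{0}} (hY : ∀ s, Y s ∈ U) : diagInter κ Y ∈ U := by
  induction n with
  | zero =>
    refine hU.1.mem_of_superset (hY Fin.elim0) (fun β hβ => ⟨hU.1.subset_Iio (hY _) hβ, ?_⟩)
      fun β hβ => hβ.1
    intro s _
    rwa [Subsingleton.elim s Fin.elim0]
  | succ n ih =>
    have hD := hU.diag_mem (Y := fun α => diagInter κ fun t => Y (Fin.cons α t)) fun α =>
      ih fun t => hY _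
    refine hU.1.mem_of_superset hD (fun β hβ => ⟨hβ.1, fun s hs => ?_⟩) fun β hβ => hβ.1
    simpa only [Fin.cons_self_tail] using (hβ.2 (s 0) (hs 0)).2 (Fin.tail s) fun i => hs i.succ

theorem exists_mem_isHomogeneous (hU : IsNormalUltrafilter κ U) (hκ : ℵ₀ < κ) {n : ℕ}
    (c : (Fin n → Ordinal.{0}) → Prop) : ∃ H ∈ U, IsHomogeneous c H := by
  induction n with
  | zero =>
    exact ⟨_, hU.1.Iio_mem, c Fin.elim0, fun x _ _ => by rw [Subsingleton.elim x Fin.elim0]⟩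
  | succ n ih =>
    choose Hα hHαU Pα hPα using fun α => ih fun t => c (Fin.cons α t)
    obtain ⟨T, hTU, P, hTP⟩ : ∃ T ∈ U, ∃ P : Prop, ∀ α ∈ T, (Pα α ↔ P) := by
      rcases hU.1.mem_or_diff_mem (Y := {α | α < κ.ord ∧ Pα α}) fun α hα => hα.1 with h | h
      · exact ⟨_, h, True, fun α hα => iff_true_intro hα.2⟩
      · exact ⟨_, h, False, fun α hα => iff_false_intro fun hP => hα.2 ⟨hα.1, hP⟩⟩
    refine ⟨T ∩ {β | β < κ.ord ∧ ∀ α < β, β ∈ Hα α},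
      hU.1.inter_mem hκ hTU (hU.diag_mem hHαU), P, fun x hx hxH => ?_⟩
    have htail := hPα (x 0) (Fin.tail x) (fun i j hij => hx (Fin.succ_lt_succ_iff.2 hij))
      fun i => (hxH i.succ).2.2 (x 0) (hx (Fin.succ_pos i))
    simp only [Fin.cons_self_tail] at htail
    exact htail.trans (hTP _ (hxH 0).1)

theorem exists_mem_avoiding (hU : IsNormalUltrafilter κ U)
    {Q : Set (Set Ordinal.{0} × Set Ordinal.{0})} (hQ : ∀ p ∈ Q, p.2 ⊆ Iio κ.ord ∧ p.2 ∉ U)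
    (n : ℕ) : ∃ D ∈ U, ∀ x : Fin n → Ordinal.{0}, (∃ p ∈ Q, Matches (range x) p.1 p.2) →
      ∃ p ∈ Q, Matches (range x) p.1 p.2 ∧ ∀ β ∈ D, (∀ i, x i < β) → β ∉ p.2 := by
  have hB : ∀ x : Fin n → Ordinal.{0}, ∃ B, Iio κ.ord \ B ∈ U ∧
      ((∃ p ∈ Q, Matches (range x) p.1 p.2) → ∃ p ∈ Q, Matches (range x) p.1 p.2 ∧ p.2 = B) := by
    intro x
    by_cases hx : ∃ p ∈ Q, Matches (range x) p.1 p.2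
    · obtain ⟨p, hpQ, hp⟩ := hx
      exact ⟨p.2, hU.1.diff_mem_of_notMem (hQ p hpQ).1 (hQ p hpQ).2, fun _ => ⟨p, hpQ, hp, rfl⟩⟩
    · exact ⟨∅, by simpa using hU.1.Iio_mem, fun h => (hx h).elim⟩
  choose B hBU hB using hB
  refine ⟨diagInter κ fun x => Iio κ.ord \ B x, hU.diagInter_mem hBU, fun x hx => ?_⟩
  obtain ⟨p, hpQ, hp, hpB⟩ := hB x hx
  exact ⟨p, hpQ, hp, fun β hβ hxβ => hpB ▸ (hβ.2 x hxβ).2⟩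

end IsNormalUltrafilter

/-- Let `κ` be uncountable and `𝒰` a normal ultrafilter on
`κ`.  Then every set in `Σ([κ]^{<ω}, 𝒫(κ) - 𝒰)` is Ramsey, as witnessed by a
homogeneous set `H` belonging to `𝒰`. -/
theorem statement12 (κ : Cardinal.{0}) (hκ : ℵ₀ < κ)
    (U : Set (Set Ordinal.{0})) (hU : IsNormalUltrafilter κ U) :
    ∀ S ∈ SigmaFam κ (finSets κ) {B | B ⊆ Set.Iio κ.ord ∧ B ∉ U},
      ∃ H ∈ bigSets κ, H ∈ U ∧ (subBig κ H ⊆ S ∨ subBig κ H ∩ S = ∅) := by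
  rintro S ⟨Q, hQ, rfl⟩
  choose D hDU hD using hU.exists_mem_avoiding fun p hp => (hQ p hp).2.1
  choose Hn hHnU P hP using fun n =>
    hU.exists_mem_isHomogeneous hκ fun x : Fin n → Ordinal.{0} =>
      ∃ p ∈ Q, Matches (range x) p.1 p.2
  set H := ⋂ n, Hn n ∩ D n
  have hHU : H ∈ U :=
    hU.1.iInter_mem (by simpa using hκ) fun n => hU.1.inter_mem hκ (hHnU n) (hDU n)
  have hHn : ∀ n, ∀ β ∈ H, β ∈ Hn n ∧ β ∈ D n := fun n β hβ => mem_iInter.1 hβ n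
  refine ⟨H, ⟨hU.1.subset_Iio hHU, hU.1.mk_eq_of_mem hκ hHU⟩, hHU, ?_⟩
  by_cases hwin : ∃ n, P n
  · obtain ⟨n, hn⟩ := hwin
    refine Or.inl fun X ⟨hXH, hX⟩ => ⟨⟨hXH.trans (hU.1.subset_Iio hHU), hX⟩, ?_⟩
    have hXinf : X.Infinite := infinite_coe_iff.1 <| infinite_iff.2 <| hX ▸ by simpa using hκ.le
    obtain ⟨x, hxmono, hxX, hxlt⟩ := hXinf.exists_strictMono_initialSegment n
    obtain ⟨p, hpQ, ⟨hpA, hpB⟩, hpD⟩ :=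
      hD n x ((hP n x hxmono fun i => (hHn n _ (hXH (hxX i))).1).2 hn)
    refine ⟨p, hpQ, hpA.trans (range_subset_iff.2 hxX), eq_empty_of_forall_notMem ?_⟩
    rintro β ⟨hβB, hβX⟩
    by_cases hβx : β ∈ range x
    · exact hpB.subset ⟨hβB, hβx⟩
    · exact hpD β (hHn n β (hXH hβX)).2 (hxlt β hβX hβx) hβB
  · refine Or.inr (eq_empty_of_forall_notMem ?_)
    rintro X ⟨⟨hXH, -⟩, -, p, hpQ, hpA, hpB⟩
    obtain ⟨n, x, hxmono, hxA⟩ := (hQ p hpQ).1.2.exists_strictMono_range_eq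
    have hxH : ∀ i, x i ∈ Hn n := fun i => (hHn n _ (hXH (hpA (hxA ▸ mem_range_self i)))).1
    refine hwin ⟨n, (hP n x hxmono hxH).1 ⟨p, hpQ, hxA.symm.subset, ?_⟩⟩
    rw [hxA]
    exact subset_empty_iff.1 (hpB ▸ inter_subset_inter_right _ hpA)
end

section
/- Let κ > ω be a cardinal. Then (assuming the Axiom of Choice) there is a set 𝒮 ∈ Δ([κ]^ω, [κ]^{<κ}) that is not Ramsey. -/
open Set Cardinal

universe u

/-!
Choose (by choice) a representative in each class of subsets of `κ` modulo finite symmetric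
difference, and call a set even when its symmetric difference with its representative has even
size; removing a single point flips this parity. Let `𝒮` consist of the `X ∈ [κ]^κ` whose first
`ω` elements form an even set. Since `κ > ω`, such an `X` has an `ω`-th element `x < κ`, and
`X ∩ x` is exactly its first `ω` elements `A`; so `X` matches the pattern `(A, x \ A)`, with
`A ∈ [κ]^ω` and `|x \ A| < κ`, and every set matching that pattern has the same first `ω`
elements. Hence both `𝒮` and its complement are unions of such patterns. Finally, removing
from `H` one of its first `ω` elements flips membership in `𝒮`, so no `H` is homogeneous.
-/

open scoped symmDiff

section FiniteParity

variable {α : Type*}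

def finiteDiffSetoid (α : Type*) : Setoid (Set α) where
  r s t := (s ∆ t).Finite
  iseqv :=
    { refl := fun s => by simp
      symm := fun h => by rwa [symmDiff_comm]
      trans := fun h₁ h₂ => (h₁.union h₂).subset (symmDiff_triangle _ _ _) }

def finiteDiffRep (s : Set α) : Set α := (Quotient.mk (finiteDiffSetoid α) s).out

theorem finite_symmDiff_finiteDiffRep (s : Set α) : (s ∆ finiteDiffRep s).Finite :=
  (finiteDiffSetoid α).symm (Quotient.mk_out s)

theorem finiteDiffRep_eq {s t : Set α} (h : (s ∆ t).Finite) :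
    finiteDiffRep s = finiteDiffRep t :=
  congrArg Quotient.out (Quotient.sound h)

def EvenParity (s : Set α) : Prop := Even (s ∆ finiteDiffRep s).ncard

theorem even_ncard_singleton_symmDiff_iff {D : Set α} (hD : D.Finite) (a : α) :
    Even ({a} ∆ D).ncard ↔ ¬ Even D.ncard := by
  by_cases ha : a ∈ D
  · rw [show {a} ∆ D = D \ {a} by ext; simp [mem_symmDiff]; grind,
      ← ncard_sdiff_singleton_add_one ha hD, Nat.even_add_one, not_not]
  · rw [show {a} ∆ D = insert a D by ext; simp [mem_symmDiff]; grind,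
      ncard_insert_of_notMem ha hD, Nat.even_add_one]

theorem evenParity_sdiff_singleton {s : Set α} {a : α} (ha : a ∈ s) :
    EvenParity (s \ {a}) ↔ ¬ EvenParity s := by
  have hs : s \ {a} = {a} ∆ s := by ext; simp [mem_symmDiff]; grind
  have hrep : finiteDiffRep (s \ {a}) = finiteDiffRep s :=
    finiteDiffRep_eq (by simp [hs])
  rw [EvenParity, EvenParity, hrep, hs, symmDiff_assoc]
  exact even_ncard_singleton_symmDiff_iff (finite_symmDiff_finiteDiffRep s) a

end FiniteParity

section FirstOmega

variable {α : Type*} [LinearOrder α]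

theorem countable_of_forall_finite_inter_Iio {A : Set α}
    (h : ∀ a ∈ A, (A ∩ Iio a).Finite) : A.Countable := by
  have hmono : StrictMonoOn (fun a => (A ∩ Iio a).ncard) A := fun a ha b _ hab =>
    ncard_lt_ncard ⟨inter_subset_inter_right A (Iio_subset_Iio hab.le),
      fun hsub => (hsub ⟨ha, hab⟩).2.false⟩ (h b ‹_›)
  exact (mapsTo_univ _ A).countable_of_injOn hmono.injOn countable_univ

/-- In a well-order, for `X` of order type at least `ω` these are the first `ω` elements of `X`. -/
def firstOmega (X : Set α) : Set α := {x ∈ X | (X ∩ Iio x).Finite}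

variable {X : Set α}

theorem firstOmega_subset (X : Set α) : firstOmega X ⊆ X := fun _ h => h.1

theorem finite_firstOmega_inter_Iio {a : α} (ha : a ∈ firstOmega X) :
    (firstOmega X ∩ Iio a).Finite :=
  ha.2.subset (inter_subset_inter_left _ (firstOmega_subset X))

theorem firstOmega_countable (X : Set α) : (firstOmega X).Countable :=
  countable_of_forall_finite_inter_Iio fun _ => finite_firstOmega_inter_Iio

theorem mem_firstOmega_of_lt {y z : α} (hy : y ∈ firstOmega X) (hz : z ∈ X) (hzy : z < y) :
    z ∈ firstOmega X :=
  ⟨hz, hy.2.subset (inter_subset_inter_right X (Iio_subset_Iio hzy.le))⟩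

theorem firstOmega_sdiff_singleton (X : Set α) (m : α) :
    firstOmega (X \ {m}) = firstOmega X \ {m} := by
  have hfin (x : α) : ((X \ {m}) ∩ Iio x).Finite ↔ (X ∩ Iio x).Finite := by
    rw [← inter_sdiff_right_comm]
    exact ⟨fun h => h.of_sdiff (finite_singleton m), fun h => h.sdiff⟩
  ext x
  simp only [firstOmega, mem_ofPred_eq, mem_sdiff, hfin]
  tauto

theorem firstOmega_eq_of_inter_Iio_eq {A : Set α} {x : α} (hXA : X ∩ Iio x = A)
    (hA : A.Infinite) (hA' : ∀ a ∈ A, (A ∩ Iio a).Finite) : firstOmega X = A := by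
  ext y
  constructor
  · rintro ⟨hyX, hfin⟩
    by_contra hyA
    have hxy : x ≤ y := not_lt.1 fun hyx => hyA (hXA ▸ ⟨hyX, hyx⟩)
    exact hA (hXA ▸ hfin.subset (inter_subset_inter_right X (Iio_subset_Iio hxy)))
  · intro hyA
    have hy : y ∈ X ∩ Iio x := hXA ▸ hyA
    refine ⟨hy.1, (hA' y hyA).subset fun z hz => ⟨?_, hz.2⟩⟩
    exact hXA ▸ ⟨hz.1, lt_trans hz.2 hy.2⟩

variable [WellFoundedLT α]

theorem firstOmega_infinite (hX : X.Infinite) : (firstOmega X).Infinite := by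
  intro hfin
  obtain ⟨x, hx, hmin⟩ := wellFounded_lt.has_min (X \ firstOmega X)
    (nonempty_of_not_subset fun h => hX (hfin.subset h))
  refine hx.2 ⟨hx.1, hfin.subset fun y hy => ?_⟩
  by_contra hy'
  exact hmin y ⟨hy.1, hy'⟩ hy.2

theorem exists_inter_Iio_eq_firstOmega (hX : ¬ X ⊆ firstOmega X) :
    ∃ x ∈ X, X ∩ Iio x = firstOmega X := by
  obtain ⟨x, hx, hmin⟩ := wellFounded_lt.has_min (X \ firstOmega X) (nonempty_of_not_subset hX)
  refine ⟨x, hx.1, Subset.antisymm (fun y hy => ?_) fun y hy => ⟨hy.1, ?_⟩⟩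
  · by_contra hy'
    exact hmin y ⟨hy.1, hy'⟩ hy.2
  · by_contra hyx
    rcases (not_lt.1 hyx).lt_or_eq with hxy | rfl
    · exact hx.2 (mem_firstOmega_of_lt hy hx.1 hxy)
    · exact hx.2 hy

end FirstOmega

section Patterns

variable {κ : Cardinal.{0}}

theorem not_countable_of_mem_bigSets (hκ : ℵ₀ < κ) {X : Set Ordinal.{0}} (hX : X ∈ bigSets κ) :
    ¬ X.Countable := by
  rw [← le_aleph0_iff_set_countable, hX.2, ← lift_aleph0.{1, 0}, lift_le, not_le]
  exact hκ

theorem infinite_of_mem_bigSets (hκ : ℵ₀ < κ) {X : Set Ordinal.{0}} (hX : X ∈ bigSets κ) :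
    X.Infinite :=
  fun h => not_countable_of_mem_bigSets hκ hX h.countable

theorem subBig_subset_bigSets {H : Set Ordinal.{0}} (hH : H ∈ bigSets κ) :
    subBig κ H ⊆ bigSets κ :=
  fun _ hX => ⟨hX.1.trans hH.1, hX.2⟩

theorem sdiff_singleton_mem_subBig (hκ : ℵ₀ < κ) {H : Set Ordinal.{0}} (hH : H ∈ bigSets κ)
    (m : Ordinal.{0}) : H \ {m} ∈ subBig κ H := by
  have hinf : ℵ₀ ≤ #(H \ {m} : Set Ordinal.{0}) :=
    infinite_iff.1 ((infinite_of_mem_bigSets hκ hH).sdiff (finite_singleton m)).to_subtype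
  refine ⟨sdiff_subset, le_antisymm (hH.2 ▸ mk_le_mk_of_subset sdiff_subset) ?_⟩
  calc lift.{1} κ = #H := hH.2.symm
    _ ≤ #(H \ {m} : Set Ordinal.{0}) + #({m} : Set Ordinal.{0}) := le_mk_sdiff_add_mk _ _
    _ = #(H \ {m} : Set Ordinal.{0}) := by rw [mk_singleton, add_one_of_aleph0_le hinf]

theorem firstOmega_mem_omegaSets (hκ : ℵ₀ < κ) {X : Set Ordinal.{0}} (hX : X ∈ bigSets κ) :
    firstOmega X ∈ omegaSets κ :=
  ⟨(firstOmega_subset X).trans hX.1, firstOmega_infinite (infinite_of_mem_bigSets hκ hX),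
    fun _ => finite_firstOmega_inter_Iio⟩

theorem Iio_sdiff_mem_smallSets {x : Ordinal.{0}} (hx : x < κ.ord) (A : Set Ordinal.{0}) :
    Iio x \ A ∈ smallSets κ κ := by
  refine ⟨fun y hy => hy.1.trans hx, ?_⟩
  calc #(Iio x \ A : Set Ordinal.{0}) ≤ #(Iio x) := mk_le_mk_of_subset sdiff_subset
    _ = lift.{1} x.card := mk_Iio_ordinal x
    _ < lift.{1} κ := lift_lt.2 (lt_ord.1 hx)

theorem matches_Iio_sdiff_iff {X A : Set Ordinal.{0}} {x : Ordinal.{0}} (hA : A ⊆ Iio x) :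
    Matches X A (Iio x \ A) ↔ X ∩ Iio x = A := by
  constructor
  · rintro ⟨hAX, hB⟩
    refine Subset.antisymm (fun y hy => ?_) (subset_inter hAX hA)
    by_contra hyA
    exact hB.subset ⟨⟨hy.2, hyA⟩, hy.1⟩
  · rintro rfl
    exact ⟨inter_subset_left, eq_empty_of_forall_notMem fun y hy => hy.1.2 ⟨hy.2, hy.1.1⟩⟩

theorem firstOmega_mem_sigmaFam (hκ : ℵ₀ < κ) (P : Set Ordinal.{0} → Prop) :
    {X ∈ bigSets κ | P (firstOmega X)} ∈ SigmaFam κ (omegaSets κ) (smallSets κ κ) := by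
  refine ⟨{p | ∃ x < κ.ord, ∃ A ∈ omegaSets κ, A ⊆ Iio x ∧ P A ∧ p = (A, Iio x \ A)}, ?_, ?_⟩
  · rintro _ ⟨x, hx, A, hA, -, -, rfl⟩
    exact ⟨hA, Iio_sdiff_mem_smallSets hx A, disjoint_sdiff_right⟩
  · ext X
    refine and_congr_right fun hX => ⟨fun hP => ?_, ?_⟩
    · obtain ⟨x, hxX, hXx⟩ := exists_inter_Iio_eq_firstOmega fun h =>
        not_countable_of_mem_bigSets hκ hX ((firstOmega_countable X).mono h)
      refine ⟨(firstOmega X, Iio x \ firstOmega X), ⟨x, hX.1 hxX, _,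
        firstOmega_mem_omegaSets hκ hX, hXx ▸ inter_subset_right, hP, rfl⟩, ?_⟩
      exact (matches_Iio_sdiff_iff (hXx ▸ inter_subset_right)).2 hXx
    · rintro ⟨_, ⟨x, -, A, hA, hAx, hP, rfl⟩, hXAB⟩
      rwa [firstOmega_eq_of_inter_Iio_eq ((matches_Iio_sdiff_iff hAx).1 hXAB) hA.2.1 hA.2.2]

theorem firstOmega_mem_deltaFam (hκ : ℵ₀ < κ) (P : Set Ordinal.{0} → Prop) :
    {X ∈ bigSets κ | P (firstOmega X)} ∈ DeltaFam κ (omegaSets κ) (smallSets κ κ) := by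
  refine ⟨firstOmega_mem_sigmaFam hκ P, ?_⟩
  convert firstOmega_mem_sigmaFam hκ (fun A => ¬ P A) using 1
  ext X
  simp only [mem_sdiff, mem_ofPred_eq]
  tauto

theorem not_isRamsey_of_forall_exists {S : Set (Set Ordinal.{0})}
    (h : ∀ H ∈ bigSets κ, ∃ X ∈ subBig κ H, ∃ Y ∈ subBig κ H, X ∈ S ∧ Y ∉ S) :
    ¬ IsRamsey κ S := by
  rintro ⟨H, hH, hsub | hdisj⟩ <;> obtain ⟨X, hX, Y, hY, hXS, hYS⟩ := h H hH
  · exact hYS (hsub hY)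
  · exact eq_empty_iff_forall_notMem.1 hdisj X ⟨hX, hXS⟩

end Patterns

/-- For every cardinal `κ > ω` there is a set
`𝒮 ∈ Δ([κ]^ω, [κ]^{<κ})` that is not Ramsey. -/
theorem statement15 (κ : Cardinal.{0}) (hκ : ℵ₀ < κ) :
    ∃ S ∈ DeltaFam κ (omegaSets κ) (smallSets κ κ), ¬ IsRamsey κ S := by
  refine ⟨_, firstOmega_mem_deltaFam hκ EvenParity, not_isRamsey_of_forall_exists fun H hH => ?_⟩
  obtain ⟨m, hm⟩ := (firstOmega_infinite (infinite_of_mem_bigSets hκ hH)).nonempty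
  have hflip : EvenParity (firstOmega (H \ {m})) ↔ ¬ EvenParity (firstOmega H) := by
    rw [firstOmega_sdiff_singleton]
    exact evenParity_sdiff_singleton hm
  have hHH : H ∈ subBig κ H := ⟨subset_rfl, hH.2⟩
  have hHm := sdiff_singleton_mem_subBig hκ hH m
  by_cases hev : EvenParity (firstOmega H)
  · exact ⟨H, hHH, H \ {m}, hHm, ⟨hH, hev⟩, fun h => hflip.1 h.2 hev⟩
  · exact ⟨H \ {m}, hHm, H, hHH, ⟨subBig_subset_bigSets hH hHm, hflip.2 hev⟩, fun h => hev h.2⟩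
end
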